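/- arXiv:2008.08425 — 2 statements merged into one kernel-verified Lean document; each statement's English description precedes it below -/
import Mathlib

section
/- Let a, D, λ, μ > 0, and set α := 4πλDa + μ and β := 4a²λ√(πD/α). Define f(s) := (4πλDa + 4a²λ√(πD/s)) · exp(−4πλDas − 8a²λ√(πDs)) for s > 0. Then the improper integral ∫₀^∞ f(s) e^{−μs} ds converges and equals 1 − μ/α + √π β (μ/α) e^{β²} erfc(β). Equivalently, the function t ↦ (1 − μ/α)(1 − exp(−2β√(αt) − αt)) + (√π β μ/α) e^{β²} (erf(β + √(αt)) − erf(β)) tends to 1 − μ/α + √π β (μ/α) e^{β²} erfc(β) as t → ∞. -/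
/-!
The closed form `G(t) = hitProb α β μ t` is an antiderivative of `f(s) e^{-μs}` on `(0, ∞)`.
Writing `r = √(αs)`, the erf term of `G'` carries the factor `e^{β²} e^{-(β + r)²} = e^{-2βr - αs}`,
so it cancels the `μ`-part of the derivative of the exponential term, and what remains is
`(α - μ + αβ / r) e^{-2βr - αs}`, which is `f(s) e^{-μs}` for the given `α` and `β`.
As `G(0) = 0`, `G` is continuous, the integrand is nonnegative and `G(t) → L` because `erf → 1`,
the fundamental theorem of calculus on `[0, ∞)` gives both integrability and the value `L`.
-/

open MeasureTheory

/-- The error function `erf x = (2/√π) ∫₀ˣ e^{-u²} du`. -/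
noncomputable def erf (x : ℝ) : ℝ :=
  (2 / Real.sqrt Real.pi) * ∫ u in (0:ℝ)..x, Real.exp (-u ^ 2)

/-- The complementary error function. -/
noncomputable def erfc (x : ℝ) : ℝ := 1 - erf x

/-- The hitting rate
`f(s) = (4πλDa + 4a²λ√(πD/s)) · exp(−4πλDas − 8a²λ√(πDs))`. -/
noncomputable def hitRate (a D lam s : ℝ) : ℝ :=
  (4 * Real.pi * lam * D * a + 4 * a ^ 2 * lam * Real.sqrt (Real.pi * D / s)) *
    Real.exp (-(4 * Real.pi * lam * D * a * s)
      - 8 * a ^ 2 * lam * Real.sqrt (Real.pi * D * s))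

open Real Filter Topology Set

lemma hasDerivAt_erf (x : ℝ) : HasDerivAt erf (2 / √π * exp (-x ^ 2)) x := by
  have hg : Continuous fun u : ℝ => exp (-u ^ 2) := by fun_prop
  exact (intervalIntegral.integral_hasDerivAt_right (hg.intervalIntegrable 0 x)
    (hg.stronglyMeasurableAtFilter _ _) hg.continuousAt).const_mul _

lemma continuous_erf : Continuous erf :=
  continuous_iff_continuousAt.2 fun x => (hasDerivAt_erf x).continuousAt

lemma tendsto_erf_atTop : Tendsto erf atTop (𝓝 1) := by
  have hint : IntegrableOn (fun u : ℝ => exp (-u ^ 2)) (Ioi 0) := by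
    simpa using (integrable_exp_neg_mul_sq one_pos).integrableOn
  have hgauss : ∫ u in Ioi (0:ℝ), exp (-u ^ 2) = √π / 2 := by
    simpa using integral_gaussian_Ioi 1
  have h := (intervalIntegral_tendsto_integral_Ioi 0 hint tendsto_id).const_mul (2 / √π)
  rw [hgauss, div_mul_div_cancel₀ (sqrt_pos.2 pi_pos).ne', div_self two_ne_zero] at h
  exact h

/-- The closed-form hitting probability by time `t` of the degradable molecule. -/
noncomputable def hitProb (α β mu t : ℝ) : ℝ :=
  (1 - mu / α) * (1 - Real.exp (-(2 * β * Real.sqrt (α * t)) - α * t))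
    + (Real.sqrt Real.pi * β * mu / α) * Real.exp (β ^ 2) *
        (erf (β + Real.sqrt (α * t)) - erf β)

section hitProb

variable {α β mu : ℝ}

@[simp]
lemma hitProb_zero : hitProb α β mu 0 = 0 := by
  simp [hitProb]

lemma continuous_hitProb : Continuous (hitProb α β mu) := by
  unfold hitProb
  have := continuous_erf
  fun_prop

lemma tendsto_hitProb_atTop (hα : 0 < α) (hβ : 0 ≤ β) :
    Tendsto (hitProb α β mu) atTop
      (𝓝 (1 - mu / α + √π * β * (mu / α) * exp (β ^ 2) * erfc β)) := by
  have hsqrt : Tendsto (fun t => √(α * t)) atTop atTop :=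
    tendsto_sqrt_atTop.comp (tendsto_id.const_mul_atTop hα)
  have hexponent : Tendsto (fun t => -(2 * β * √(α * t)) - α * t) atTop atBot := by
    refine tendsto_atBot_mono (fun t => ?_) (tendsto_neg_atTop_atBot.comp
      (tendsto_id.const_mul_atTop hα))
    have := mul_nonneg hβ (sqrt_nonneg (α * t))
    simp only [Function.comp_apply, id]
    linarith
  have hlimit : 1 - mu / α + √π * β * (mu / α) * exp (β ^ 2) * erfc β
      = (1 - mu / α) * (1 - 0) + √π * β * mu / α * exp (β ^ 2) * (1 - erf β) := by
    rw [erfc]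
    ring
  rw [hlimit]
  exact (((tendsto_exp_atBot.comp hexponent).const_sub 1).const_mul (1 - mu / α)).add
    (((tendsto_erf_atTop.comp (tendsto_atTop_add_const_left _ β hsqrt)).sub_const
      (erf β)).const_mul (√π * β * mu / α * exp (β ^ 2)))

lemma hasDerivAt_hitProb (hα : 0 < α) {s : ℝ} (hs : 0 < s) :
    HasDerivAt (hitProb α β mu)
      ((α - mu + α * β / √(α * s)) * exp (-(2 * β * √(α * s)) - α * s)) s := by
  have hαs : 0 < α * s := mul_pos hα hs
  set r := √(α * s) with hr
  have hr_sq : r ^ 2 = α * s := sq_sqrt hαs.le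
  have hlin : HasDerivAt (fun t => α * t) α s := by
    simpa using (hasDerivAt_id s).const_mul α
  have hsqrt : HasDerivAt (fun t => √(α * t)) (α / (2 * r)) s := by
    refine ((hasDerivAt_sqrt hαs.ne').comp s hlin).congr_deriv ?_
    rw [← hr]
    field_simp
  have hexp := (((hsqrt.const_mul (2 * β)).neg).sub hlin).exp
  have herf := (hasDerivAt_erf (β + r)).comp s (hsqrt.const_add β)
  refine (((hexp.const_sub 1).const_mul (1 - mu / α)).add
    ((herf.sub_const (erf β)).const_mul (√π * β * mu / α * exp (β ^ 2)))).congr_deriv ?_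
  have hgauss : exp (-(β + r) ^ 2) = exp (-(2 * β * r) - α * s) / exp (β ^ 2) := by
    rw [eq_div_iff (exp_pos _).ne', ← exp_add]
    congr 1
    linear_combination -hr_sq
  simp only [Pi.neg_apply, Pi.sub_apply, hgauss]
  field_simp
  ring

end hitProb

lemma hitRate_nonneg {a D lam : ℝ} (ha : 0 ≤ a) (hD : 0 ≤ D) (hlam : 0 ≤ lam) (s : ℝ) :
    0 ≤ hitRate a D lam s := by
  unfold hitRate
  positivity

lemma hitRate_mul_exp_eq {a D lam mu α β s : ℝ} (hα_pos : 0 < α)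
    (hα : α = 4 * π * lam * D * a + mu) (hβ : β = 4 * a ^ 2 * lam * √(π * D / α))
    (hs : 0 < s) :
    hitRate a D lam s * exp (-mu * s) =
      (α - mu + α * β / √(α * s)) * exp (-(2 * β * √(α * s)) - α * s) := by
  have hαs : 0 ≤ α * s := (mul_pos hα_pos hs).le
  have hsqrt_mul : √(π * D * s) = √(π * D / α) * √(α * s) := by
    rw [← sqrt_mul' _ hαs]
    congr 1
    field_simp
  have hsqrt_div : √(π * D / s) = α * √(π * D / α) / √(α * s) := by
    rw [eq_div_iff (sqrt_pos.2 (mul_pos hα_pos hs)).ne', ← sqrt_mul' _ hαs,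
      ← sqrt_sq hα_pos.le, ← sqrt_mul (sq_nonneg α), sqrt_sq hα_pos.le]
    congr 1
    field_simp
  rw [hitRate, mul_assoc, ← exp_add, hsqrt_mul, hsqrt_div, hβ, hα]
  congr 1
  · ring
  · congr 1
    ring

/-- Corollary 1: with `α = 4πλDa + μ` and `β = 4a²λ√(πD/α)`, the improper integral
`∫₀^∞ f(s)e^{−μs} ds` converges and equals `1 − μ/α + √π β (μ/α) e^{β²} erfc(β)`;
equivalently the closed-form hitting probability tends to this value as `t → ∞`. -/
theorem degradable_hitting_probability_infty (a D lam mu : ℝ) (ha : 0 < a) (hD : 0 < D)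
    (hlam : 0 < lam) (hmu : 0 < mu) (α β : ℝ)
    (hα : α = 4 * Real.pi * lam * D * a + mu)
    (hβ : β = 4 * a ^ 2 * lam * Real.sqrt (Real.pi * D / α)) :
    IntegrableOn (fun s : ℝ => hitRate a D lam s * Real.exp (-mu * s)) (Set.Ioi 0) ∧
    (∫ s in Set.Ioi (0:ℝ), hitRate a D lam s * Real.exp (-mu * s)) =
      1 - mu / α + Real.sqrt Real.pi * β * (mu / α) * Real.exp (β ^ 2) * erfc β ∧
    Filter.Tendsto
      (fun t : ℝ =>
        (1 - mu / α) * (1 - Real.exp (-(2 * β * Real.sqrt (α * t)) - α * t))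
          + (Real.sqrt Real.pi * β * mu / α) * Real.exp (β ^ 2) *
              (erf (β + Real.sqrt (α * t)) - erf β))
      Filter.atTop
      (nhds (1 - mu / α + Real.sqrt Real.pi * β * (mu / α) * Real.exp (β ^ 2) * erfc β)) := by
  have hα_pos : 0 < α := by rw [hα]; positivity
  have hβ_nonneg : 0 ≤ β := by rw [hβ]; positivity
  have hderiv : ∀ s ∈ Ioi (0:ℝ),
      HasDerivAt (hitProb α β mu) (hitRate a D lam s * exp (-mu * s)) s := fun s hs =>
    hitRate_mul_exp_eq hα_pos hα hβ hs ▸ hasDerivAt_hitProb hα_pos hs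
  have hnonneg : ∀ s ∈ Ioi (0:ℝ), 0 ≤ hitRate a D lam s * exp (-mu * s) := fun s _ =>
    mul_nonneg (hitRate_nonneg ha.le hD.le hlam.le s) (exp_pos _).le
  have hcont : ContinuousWithinAt (hitProb α β mu) (Ici 0) 0 :=
    continuous_hitProb.continuousWithinAt
  have hlim := tendsto_hitProb_atTop (mu := mu) hα_pos hβ_nonneg
  have hint := integrableOn_Ioi_deriv_of_nonneg hcont hderiv hnonneg hlim
  refine ⟨hint, ?_, hlim⟩
  rw [integral_Ioi_of_hasDerivAt_of_tendsto hcont hderiv hint hlim, hitProb_zero, sub_zero]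
end

section
/- For every β > 0, it holds that 0 < √π · β · e^{β²} · erfc(β) < 1. Consequently, for a, D, λ, μ > 0 with α := 4πλDa + μ and β := 4a²λ√(πD/α), the quantity p_∞ := 1 − μ/α + √π β (μ/α) e^{β²} erfc(β) satisfies 0 < p_∞ < 1. -/
open MeasureTheory Real Set Filter Topology

lemma integrable_exp_neg_sq : Integrable fun x : ℝ => exp (-x ^ 2) := by
  simpa [neg_mul] using integrable_exp_neg_mul_sq one_pos

lemma integrable_mul_exp_neg_sq : Integrable fun x : ℝ => x * exp (-x ^ 2) := by
  simpa [neg_mul] using integrable_mul_exp_neg_mul_sq one_pos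

lemma integral_Ioi_pos {f : ℝ → ℝ} {a : ℝ} (hf : IntegrableOn f (Ioi a))
    (hpos : ∀ x ∈ Ioi a, 0 < f x) : 0 < ∫ x in Ioi a, f x := by
  rw [setIntegral_pos_iff_support_of_nonneg_ae
    (ae_restrict_of_forall_mem measurableSet_Ioi fun x hx => (hpos x hx).le) hf]
  exact (isOpen_Ioi.measure_pos volume nonempty_Ioi).trans_le
    (measure_mono fun x hx => ⟨(hpos x hx).ne', hx⟩)

lemma integral_Ioi_mul_exp_neg_sq (β : ℝ) :
    ∫ x in Ioi β, x * exp (-x ^ 2) = exp (-β ^ 2) / 2 := by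
  have hderiv (x : ℝ) : HasDerivAt (fun y => -exp (-y ^ 2) / 2) (x * exp (-x ^ 2)) x := by
    have hsq : HasDerivAt (fun y : ℝ => -y ^ 2) (-(2 * x)) x :=
      (hasDerivAt_pow 2 x).neg.congr_deriv (by norm_num)
    exact (hsq.exp.neg.div_const 2).congr_deriv (by ring)
  have hlim : Tendsto (fun y : ℝ => -exp (-y ^ 2) / 2) atTop (𝓝 0) := by
    simpa using ((tendsto_exp_atBot.comp
      (tendsto_neg_atTop_atBot.comp (tendsto_pow_atTop two_ne_zero))).neg.div_const 2)
  rw [integral_Ioi_of_hasDerivAt_of_tendsto' (fun x _ => hderiv x)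
    integrable_mul_exp_neg_sq.integrableOn hlim]
  ring

lemma integral_Ioi_exp_neg_sq_lt {β : ℝ} (hβ : 0 < β) :
    ∫ x in Ioi β, exp (-x ^ 2) < exp (-β ^ 2) / (2 * β) := by
  have hgap : 0 < ∫ x in Ioi β, (x * exp (-x ^ 2) / β - exp (-x ^ 2)) := by
    refine integral_Ioi_pos
      ((integrable_mul_exp_neg_sq.div_const β).sub integrable_exp_neg_sq).integrableOn
      fun x (hx : β < x) => ?_
    have : exp (-x ^ 2) < x * exp (-x ^ 2) / β := by
      rw [lt_div_iff₀ hβ]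
      exact mul_lt_mul_of_pos_left hx (exp_pos _) |>.trans_eq (mul_comm _ _)
    linarith
  rw [integral_sub (integrable_mul_exp_neg_sq.div_const β).integrableOn
    integrable_exp_neg_sq.integrableOn, integral_div, integral_Ioi_mul_exp_neg_sq, div_div] at hgap
  linarith

lemma erfc_eq_integral_Ioi (β : ℝ) :
    erfc β = 2 / √π * ∫ x in Ioi β, exp (-x ^ 2) := by
  have hsplit : (∫ x in (0 : ℝ)..β, exp (-x ^ 2)) + ∫ x in Ioi β, exp (-x ^ 2) = √π / 2 := by
    rw [intervalIntegral.integral_interval_add_Ioi integrable_exp_neg_sq.integrableOn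
      integrable_exp_neg_sq.integrableOn]
    simpa [neg_mul] using integral_gaussian_Ioi 1
  have hsqrt : √π ≠ 0 := (sqrt_pos.2 pi_pos).ne'
  rw [erfc, erf, eq_sub_of_add_eq hsplit]
  field_simp
  ring

lemma erfc_pos (β : ℝ) : 0 < erfc β := by
  rw [erfc_eq_integral_Ioi]
  have := sqrt_pos.2 pi_pos
  have : 0 < ∫ x in Ioi β, exp (-x ^ 2) :=
    integral_Ioi_pos integrable_exp_neg_sq.integrableOn fun x _ => exp_pos _
  positivity

lemma sqrt_pi_mul_mul_exp_sq_mul_erfc_lt_one {β : ℝ} (hβ : 0 < β) :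
    √π * β * exp (β ^ 2) * erfc β < 1 := by
  have hsqrt : √π ≠ 0 := (sqrt_pos.2 pi_pos).ne'
  calc √π * β * exp (β ^ 2) * erfc β
      = 2 * β * exp (β ^ 2) * ∫ x in Ioi β, exp (-x ^ 2) := by
        rw [erfc_eq_integral_Ioi]
        field_simp
    _ < 2 * β * exp (β ^ 2) * (exp (-β ^ 2) / (2 * β)) := by
        gcongr
        exact integral_Ioi_exp_neg_sq_lt hβ
    _ = 1 := by
        rw [exp_neg]
        field_simp

/-- For every `β > 0`, `0 < √π β e^{β²} erfc(β) < 1`; consequently, with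
`α = 4πλDa + μ` and `β = 4a²λ√(πD/α)`, the probability
`p_∞ = 1 − μ/α + √π β (μ/α) e^{β²} erfc(β)` satisfies `0 < p_∞ < 1`. -/
theorem pInfty_lt_one :
    (∀ β : ℝ, 0 < β →
      0 < Real.sqrt Real.pi * β * Real.exp (β ^ 2) * erfc β ∧
      Real.sqrt Real.pi * β * Real.exp (β ^ 2) * erfc β < 1) ∧
    ∀ a D lam mu : ℝ, 0 < a → 0 < D → 0 < lam → 0 < mu →
      ∀ α β : ℝ, α = 4 * Real.pi * lam * D * a + mu →
        β = 4 * a ^ 2 * lam * Real.sqrt (Real.pi * D / α) →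
        0 < 1 - mu / α + Real.sqrt Real.pi * β * (mu / α) * Real.exp (β ^ 2) * erfc β ∧
        1 - mu / α + Real.sqrt Real.pi * β * (mu / α) * Real.exp (β ^ 2) * erfc β < 1 := by
  have hbounds (β : ℝ) (hβ : 0 < β) :
      0 < √π * β * exp (β ^ 2) * erfc β ∧ √π * β * exp (β ^ 2) * erfc β < 1 := by
    have := erfc_pos β
    exact ⟨by positivity, sqrt_pi_mul_mul_exp_sq_mul_erfc_lt_one hβ⟩
  refine ⟨hbounds, fun a D lam mu ha hD hlam hmu α β hα hβ => ?_⟩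
  have hcapture : 0 < 4 * π * lam * D * a := by positivity
  have hαpos : 0 < α := by linarith
  have hβpos : 0 < β := by
    have : 0 < √(π * D / α) := sqrt_pos.2 (by positivity)
    rw [hβ]; positivity
  obtain ⟨hK0, hK1⟩ := hbounds β hβpos
  have hm0 : 0 < mu / α := by positivity
  have hm1 : mu / α < 1 := by rw [div_lt_one hαpos]; linarith
  have hrw : √π * β * (mu / α) * exp (β ^ 2) * erfc β
      = mu / α * (√π * β * exp (β ^ 2) * erfc β) := by ring
  rw [hrw]
  constructor <;> nlinarith
end
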